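/- arXiv:2405.13513 — 6 statements merged into one kernel-verified Lean document; each statement's English description precedes it below -/
import Mathlib

section
/- Let S be a finite nonempty set, p : S → S → ℝ a stochastic matrix (p(i,j) ≥ 0 for all i,j and Σ_j p(i,j) = 1 for all i) with all entries strictly positive, g : S → ℝ, and ζ ∈ ℝ. Then there exist ρ > 0 and V : S → ℝ with V(i) > 0 for all i such that V(i) = (exp(ζ·g(i))/ρ) · Σ_j p(i,j)·V(j) for every i ∈ S. -/
/-!
This is the Perron–Frobenius theorem for the positive matrix `Q(i,j) = exp(ζ g(i)) p(i,j)`, proved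
by the Collatz–Wielandt max–min argument. The function `r(V) = minᵢ (QV)ᵢ / Vᵢ` is continuous on
positive vectors, and `Q` maps the standard simplex into them, so `V ↦ r(QV)` attains its maximum
`ρ` on the simplex at some `V`. Then `W = QV` satisfies `ρ W ≤ QW`; if the inequality were not an
equality, positivity of `Q` would give `ρ QW < Q(QW)` in every coordinate, i.e. `r(QW) > ρ`,
contradicting maximality after normalising `W` back into the simplex.
-/

open Finset

theorem inv_sum_smul_mem_stdSimplex {S : Type*} [Fintype S] {V : S → ℝ} (hV : 0 ≤ V)
    (hV₀ : ∑ i, V i ≠ 0) : (∑ i, V i)⁻¹ • V ∈ stdSimplex ℝ S :=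
  ⟨fun i => smul_nonneg (inv_nonneg.2 (sum_nonneg fun j _ => hV j)) (hV i), by
    simp only [Pi.smul_apply, smul_eq_mul, ← mul_sum, inv_mul_cancel₀ hV₀]⟩

namespace Matrix

variable {S : Type*} [Fintype S] {Q : Matrix S S ℝ}

theorem mulVec_pos_of_nonneg_of_ne_zero (hQ : ∀ i j, 0 < Q i j) {V : S → ℝ} (hV : 0 ≤ V)
    (hV₀ : V ≠ 0) (i : S) : 0 < (Q *ᵥ V) i := by
  obtain ⟨j, hj⟩ := Function.ne_iff.mp hV₀
  exact sum_pos' (fun k _ => mul_nonneg (hQ i k).le (hV k))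
    ⟨j, mem_univ j, mul_pos (hQ i j) ((hV j).lt_of_ne' hj)⟩

variable [Nonempty S]

theorem mulVec_pos_of_pos (hQ : ∀ i j, 0 < Q i j) {V : S → ℝ} (hV : ∀ i, 0 < V i) :
    ∀ i, 0 < (Q *ᵥ V) i :=
  mulVec_pos_of_nonneg_of_ne_zero hQ (fun i => (hV i).le) fun h => by
    simpa [h] using hV (Classical.arbitrary S)

/-- Only meaningful for positive `V`: a zero coordinate contributes the junk ratio `x / 0 = 0`. -/
noncomputable def collatzWielandt (Q : Matrix S S ℝ) (V : S → ℝ) : ℝ :=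
  univ.inf' univ_nonempty fun i => (Q *ᵥ V) i / V i

theorem le_collatzWielandt_iff {V : S → ℝ} (hV : ∀ i, 0 < V i) {ρ : ℝ} :
    ρ ≤ collatzWielandt Q V ↔ ρ • V ≤ Q *ᵥ V := by
  simp only [collatzWielandt, le_inf'_iff, mem_univ, forall_const, le_div_iff₀ (hV _),
    Pi.le_def, Pi.smul_apply, smul_eq_mul]

theorem lt_collatzWielandt_iff {V : S → ℝ} (hV : ∀ i, 0 < V i) {ρ : ℝ} :
    ρ < collatzWielandt Q V ↔ ∀ i, ρ * V i < (Q *ᵥ V) i := by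
  simp only [collatzWielandt, lt_inf'_iff, mem_univ, forall_const, lt_div_iff₀ (hV _)]

theorem collatzWielandt_smul (V : S → ℝ) {c : ℝ} (hc : c ≠ 0) :
    collatzWielandt Q (c • V) = collatzWielandt Q V := by
  simp only [collatzWielandt, mulVec_smul, Pi.smul_apply, smul_eq_mul,
    mul_div_mul_left _ _ hc]

theorem continuousOn_collatzWielandt :
    ContinuousOn (collatzWielandt Q) {V | ∀ i, 0 < V i} :=
  ContinuousOn.finset_inf'_apply univ_nonempty fun i _ =>
    ((by fun_prop : Continuous fun V : S → ℝ => (Q *ᵥ V) i).continuousOn).div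
      (continuous_apply i).continuousOn fun _ hV => (hV i).ne'

theorem lt_collatzWielandt_mulVec (hQ : ∀ i j, 0 < Q i j) {V : S → ℝ} (hV : ∀ i, 0 < V i)
    {ρ : ℝ} (hle : ρ • V ≤ Q *ᵥ V) (hne : ρ • V ≠ Q *ᵥ V) :
    ρ < collatzWielandt Q (Q *ᵥ V) := by
  refine (lt_collatzWielandt_iff (mulVec_pos_of_pos hQ hV)).2 fun i => ?_
  have := mulVec_pos_of_nonneg_of_ne_zero hQ (sub_nonneg.2 hle) (sub_ne_zero.2 hne.symm) i
  simpa [mulVec_sub, mulVec_smul] using this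

theorem exists_pos_mulVec_eq_smul (hQ : ∀ i j, 0 < Q i j) :
    ∃ ρ : ℝ, 0 < ρ ∧ ∃ V : S → ℝ, (∀ i, 0 < V i) ∧ Q *ᵥ V = ρ • V := by
  classical
  have hpos : ∀ V ∈ stdSimplex ℝ S, ∀ i, 0 < (Q *ᵥ V) i := fun V hV =>
    mulVec_pos_of_nonneg_of_ne_zero hQ hV.1 fun h => by simpa [h] using hV.2
  obtain ⟨V, hV, hmax⟩ := (isCompact_stdSimplex ℝ S).exists_isMaxOn
    ⟨_, single_mem_stdSimplex ℝ (Classical.arbitrary S)⟩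
    (continuousOn_collatzWielandt.comp (by fun_prop : Continuous (Q *ᵥ ·)).continuousOn hpos)
  set W := Q *ᵥ V
  have hW := hpos V hV
  refine ⟨collatzWielandt Q W, (lt_collatzWielandt_iff hW).2 fun i => ?_, W, hW, ?_⟩
  · simpa using mulVec_pos_of_pos hQ hW i
  by_contra hne
  have hs : 0 < ∑ i, W i := sum_pos (fun i _ => hW i) univ_nonempty
  have hmax' := isMaxOn_iff.1 hmax _ (inv_sum_smul_mem_stdSimplex (fun i => (hW i).le) hs.ne')
  rw [Function.comp_apply, mulVec_smul, collatzWielandt_smul _ (inv_ne_zero hs.ne')] at hmax'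
  exact hmax'.not_gt <|
    lt_collatzWielandt_mulVec hQ hW ((le_collatzWielandt_iff hW).1 le_rfl) (Ne.symm hne)

end Matrix

theorem multiplicative_poisson_exists_general
    {S : Type*} [Fintype S] [Nonempty S]
    (p : S → S → ℝ)
    (hp_pos : ∀ i j, 0 < p i j)
    (g : S → ℝ) (ζ : ℝ) :
    ∃ (ρ : ℝ) (V : S → ℝ), 0 < ρ ∧ (∀ i, 0 < V i) ∧
      ∀ i, V i = (Real.exp (ζ * g i) / ρ) * ∑ j, p i j * V j := by
  obtain ⟨ρ, hρ, V, hV, hQV⟩ := Matrix.exists_pos_mulVec_eq_smul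
    (Q := Matrix.of fun i j => Real.exp (ζ * g i) * p i j)
    fun i j => mul_pos (Real.exp_pos _) (hp_pos i j)
  refine ⟨ρ, V, hρ, hV, fun i => ?_⟩
  have h := congrFun hQV i
  simp only [Matrix.mulVec, dotProduct, Matrix.of_apply, mul_assoc, ← mul_sum, Pi.smul_apply,
    smul_eq_mul] at h
  rw [div_mul_eq_mul_div, h]
  field_simp

/-- Existence of a solution to the multiplicative Poisson equation:
for a finite nonempty state space `S`, a stochastic matrix `p` with strictly
positive entries, a reward `g` and tilting parameter `ζ`, there exist `ρ > 0`
and a strictly positive `V` with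
`V i = (exp (ζ * g i) / ρ) * ∑ j, p i j * V j` for every `i`. -/
theorem multiplicative_poisson_exists
    {S : Type*} [Fintype S] [Nonempty S]
    (p : S → S → ℝ)
    (hp_pos : ∀ i j, 0 < p i j)
    (hp_row : ∀ i, ∑ j, p i j = 1)
    (g : S → ℝ) (ζ : ℝ) :
    ∃ (ρ : ℝ) (V : S → ℝ), 0 < ρ ∧ (∀ i, 0 < V i) ∧
      ∀ i, V i = (Real.exp (ζ * g i) / ρ) * ∑ j, p i j * V j :=
  multiplicative_poisson_exists_general p hp_pos g ζ
end

section
/- Let S be a finite nonempty set, p : S → S → ℝ a stochastic matrix with all entries strictly positive, g : S → ℝ, and ζ ∈ ℝ. Let Q_ζ be the S×S matrix Q_ζ(i,j) := exp(ζ·g(i))·p(i,j), and suppose ρ > 0 and a strictly positive V : S → ℝ satisfy Q_ζ V = ρ V. Then for every starting state x ∈ S, (1/n)·log((Q_ζ^n 𝟙)(x)) converges to log ρ as n → ∞, where 𝟙 denotes the all-ones vector; in particular the limit exists and is independent of x. -/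
/-!
The tilted matrix `Q` has nonnegative entries, so `w ↦ Qⁿ w` is monotone, and `Qⁿ V = ρⁿ V`.
A strictly positive vector on a finite set is comparable to the all-ones vector,
`a • V ≤ 𝟙 ≤ b • V`, so `(Qⁿ 𝟙) x` lies between `a V(x) ρⁿ` and `b V(x) ρⁿ`. After taking
logarithms and dividing by `n`, the constants disappear in the limit.
-/

open Filter Topology Matrix

namespace Matrix

variable {S : Type*} [Fintype S] [DecidableEq S]

theorem pow_mulVec_eq_pow_smul {R : Type*} [CommSemiring R] {A : Matrix S S R} {v : S → R}
    {μ : R} (h : A *ᵥ v = μ • v) (n : ℕ) : (A ^ n) *ᵥ v = μ ^ n • v := by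
  induction n with
  | zero => simp
  | succ n ih => rw [pow_succ, ← mulVec_mulVec, h, mulVec_smul, ih, smul_smul, pow_succ']

theorem pow_mulVec_mono {R : Type*} [Semiring R] [PartialOrder R] [IsOrderedRing R]
    {A : Matrix S S R} (hA : ∀ i j, 0 ≤ A i j) (n : ℕ) {u w : S → R} (huw : u ≤ w) :
    (A ^ n) *ᵥ u ≤ (A ^ n) *ᵥ w := fun i =>
  dotProduct_le_dotProduct_of_nonneg_left huw fun j => pow_apply_nonneg hA n i j

end Matrix

theorem exists_smul_le_one_le_smul {S : Type*} [Fintype S] {V : S → ℝ} (hV : ∀ i, 0 < V i) :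
    ∃ a b : ℝ, 0 < a ∧ a • V ≤ 1 ∧ 1 ≤ b • V := by
  have hsum : ∀ i, V i ≤ ∑ j, V j := fun i =>
    Finset.single_le_sum (fun j _ => (hV j).le) (Finset.mem_univ i)
  have hinv : ∀ i, (V i)⁻¹ ≤ ∑ j, (V j)⁻¹ := fun i =>
    Finset.single_le_sum (fun j _ => (inv_pos.2 (hV j)).le) (Finset.mem_univ i)
  have hpos : 0 < 1 + ∑ j, V j :=
    add_pos_of_pos_of_nonneg one_pos (Finset.sum_nonneg fun j _ => (hV j).le)
  refine ⟨(1 + ∑ j, V j)⁻¹, ∑ j, (V j)⁻¹, inv_pos.2 hpos, fun i => ?_, fun i => ?_⟩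
  · rw [Pi.smul_apply, smul_eq_mul, inv_mul_le_iff₀ hpos, Pi.one_apply, mul_one]
    linarith [hsum i]
  · calc (1 : S → ℝ) i = (V i)⁻¹ * V i := (inv_mul_cancel₀ (hV i).ne').symm
      _ ≤ (∑ j, (V j)⁻¹) * V i := mul_le_mul_of_nonneg_right (hinv i) (hV i).le

theorem tendsto_inv_mul_log_const_mul_pow {ρ K : ℝ} (hρ : 0 < ρ) (hK : 0 < K) :
    Tendsto (fun n : ℕ => (1 / (n : ℝ)) * Real.log (K * ρ ^ n)) atTop (𝓝 (Real.log ρ)) := by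
  have hlim : Tendsto (fun n : ℕ => Real.log K / n + Real.log ρ) atTop (𝓝 (Real.log ρ)) := by
    simpa using (tendsto_const_div_atTop_nhds_zero_nat (Real.log K)).add_const (Real.log ρ)
  refine hlim.congr' ?_
  filter_upwards [eventually_ne_atTop 0] with n hn
  rw [Real.log_mul hK.ne' (pow_pos hρ n).ne', Real.log_pow]
  field_simp

theorem tendsto_inv_mul_log_of_le_of_le {u : ℕ → ℝ} {ρ c C : ℝ} (hρ : 0 < ρ) (hc : 0 < c)
    (hlow : ∀ n, c * ρ ^ n ≤ u n) (hup : ∀ n, u n ≤ C * ρ ^ n) :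
    Tendsto (fun n : ℕ => (1 / (n : ℝ)) * Real.log (u n)) atTop (𝓝 (Real.log ρ)) := by
  have hlow_pos : ∀ n, 0 < c * ρ ^ n := fun n => mul_pos hc (pow_pos hρ n)
  have hC : 0 < C := pos_of_mul_pos_left ((hlow_pos 0).trans_le ((hlow 0).trans (hup 0))) (by simp)
  refine tendsto_of_tendsto_of_tendsto_of_le_of_le (tendsto_inv_mul_log_const_mul_pow hρ hc)
    (tendsto_inv_mul_log_const_mul_pow hρ hC) (fun n => ?_) (fun n => ?_)
  · exact mul_le_mul_of_nonneg_left (Real.log_le_log (hlow_pos n) (hlow n)) (by positivity)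
  · exact mul_le_mul_of_nonneg_left
      (Real.log_le_log ((hlow_pos n).trans_le (hlow n)) (hup n)) (by positivity)

theorem scaled_log_mgf_tendsto_log_rho_general
    {S : Type*} [Fintype S] [DecidableEq S]
    (p : S → S → ℝ)
    (hp_pos : ∀ i j, 0 < p i j)
    (g : S → ℝ) (ζ : ℝ)
    (ρ : ℝ) (hρ : 0 < ρ)
    (V : S → ℝ) (hV : ∀ i, 0 < V i)
    (heig : (Matrix.of fun i j => Real.exp (ζ * g i) * p i j).mulVec V = ρ • V) :
    ∀ x : S,
      Filter.Tendsto
        (fun n : ℕ =>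
          (1 / (n : ℝ)) *
            Real.log
              (((Matrix.of fun i j => Real.exp (ζ * g i) * p i j) ^ n).mulVec
                (fun _ => (1 : ℝ)) x))
        Filter.atTop (nhds (Real.log ρ)) := by
  intro x
  set Q : Matrix S S ℝ := Matrix.of fun i j => Real.exp (ζ * g i) * p i j
  have hQ : ∀ i j, 0 ≤ Q i j := fun i j => (mul_pos (Real.exp_pos _) (hp_pos i j)).le
  have hQV (n : ℕ) (t : ℝ) : ((Q ^ n) *ᵥ (t • V)) x = t * V x * ρ ^ n := by
    rw [mulVec_smul, pow_mulVec_eq_pow_smul heig]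
    simp only [Pi.smul_apply, smul_eq_mul]
    ring
  obtain ⟨a, b, ha, haV, hbV⟩ := exists_smul_le_one_le_smul hV
  refine tendsto_inv_mul_log_of_le_of_le (C := b * V x) hρ (mul_pos ha (hV x))
    (fun n => ?_) (fun n => ?_)
  · exact (hQV n a).symm.trans_le (pow_mulVec_mono hQ n haV x)
  · exact (pow_mulVec_mono hQ n hbV x).trans_eq (hQV n b)

/-- If `ρ > 0` and a strictly positive `V` satisfy `Q_ζ V = ρ V` where
`Q_ζ i j = exp (ζ * g i) * p i j`, then for every starting state `x`,
`(1/n) * log ((Q_ζ^n 𝟙) x) → log ρ` as `n → ∞`. -/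
theorem scaled_log_mgf_tendsto_log_rho
    {S : Type*} [Fintype S] [Nonempty S] [DecidableEq S]
    (p : S → S → ℝ)
    (hp_pos : ∀ i j, 0 < p i j)
    (hp_row : ∀ i, ∑ j, p i j = 1)
    (g : S → ℝ) (ζ : ℝ)
    (ρ : ℝ) (hρ : 0 < ρ)
    (V : S → ℝ) (hV : ∀ i, 0 < V i)
    (heig : (Matrix.of fun i j => Real.exp (ζ * g i) * p i j).mulVec V = ρ • V) :
    ∀ x : S,
      Filter.Tendsto
        (fun n : ℕ =>
          (1 / (n : ℝ)) *
            Real.log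
              (((Matrix.of fun i j => Real.exp (ζ * g i) * p i j) ^ n).mulVec
                (fun _ => (1 : ℝ)) x))
        Filter.atTop (nhds (Real.log ρ)) :=
  scaled_log_mgf_tendsto_log_rho_general p hp_pos g ζ ρ hρ V hV heig
end

section
/- Let S be a finite nonempty set, p : S → S → ℝ a stochastic matrix with all entries strictly positive, and g : S → ℝ. Suppose ρ : ℝ → ℝ and V : ℝ → S → ℝ are such that for every ζ ∈ ℝ, ρ(ζ) > 0, V(ζ) is strictly positive, and V(ζ)(i) = (exp(ζ·g(i))/ρ(ζ)) · Σ_j p(i,j)·V(ζ)(j) for all i. Then the function ζ ↦ log ρ(ζ) is convex on ℝ. -/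
/-!
Kingman's argument. The tilted kernels `Q_ζ i j = exp (ζ * g i) * p i j` satisfy
`Q_{a x + b y} = Q_x ^ a * Q_y ^ b` entrywise, so by Hölder's inequality the positive vector
`W = V x ^ a * V y ^ b` satisfies `Q_{a x + b y} W ≤ ρ x ^ a * ρ y ^ b • W`. Comparing `W` with the
positive eigenvector `V (a x + b y)` at the index where their ratio is extremal
(Collatz–Wielandt) gives `ρ (a x + b y) ≤ ρ x ^ a * ρ y ^ b`, i.e. convexity of `log ρ`.
-/

open Finset Matrix Real

theorem Real.sum_rpow_mul_rpow_le_of_add_eq_one {ι : Type*} (s : Finset ι) {f g : ι → ℝ}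
    (hf : ∀ i ∈ s, 0 ≤ f i) (hg : ∀ i ∈ s, 0 ≤ g i)
    (hF : 0 < ∑ i ∈ s, f i) (hG : 0 < ∑ i ∈ s, g i)
    {a b : ℝ} (ha : 0 ≤ a) (hb : 0 ≤ b) (hab : a + b = 1) :
    ∑ i ∈ s, f i ^ a * g i ^ b ≤ (∑ i ∈ s, f i) ^ a * (∑ i ∈ s, g i) ^ b := by
  set F := ∑ i ∈ s, f i
  set G := ∑ i ∈ s, g i
  have amgm : ∀ i ∈ s, f i ^ a * g i ^ b ≤ F ^ a * G ^ b * (a * (f i / F) + b * (g i / G)) := by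
    intro i hi
    calc f i ^ a * g i ^ b = F ^ a * G ^ b * ((f i / F) ^ a * (g i / G) ^ b) := by
          rw [div_rpow (hf i hi) hF.le, div_rpow (hg i hi) hG.le]
          field_simp
      _ ≤ F ^ a * G ^ b * (a * (f i / F) + b * (g i / G)) := by
          gcongr
          exact geom_mean_le_arith_mean2_weighted ha hb (div_nonneg (hf i hi) hF.le)
            (div_nonneg (hg i hi) hG.le) hab
  calc ∑ i ∈ s, f i ^ a * g i ^ b
      ≤ ∑ i ∈ s, F ^ a * G ^ b * (a * (f i / F) + b * (g i / G)) := sum_le_sum amgm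
    _ = F ^ a * G ^ b * (a * (F / F) + b * (G / G)) := by
        rw [← mul_sum, sum_add_distrib, ← mul_sum, ← mul_sum, ← sum_div, ← sum_div]
    _ = F ^ a * G ^ b := by rw [div_self hF.ne', div_self hG.ne', mul_one, mul_one, hab, mul_one]

namespace Matrix

variable {n : Type*} [Fintype n]

theorem mulVec_mono {Q : Matrix n n ℝ} (hQ : ∀ i j, 0 ≤ Q i j) {v w : n → ℝ} (hvw : v ≤ w) :
    Q *ᵥ v ≤ Q *ᵥ w :=
  fun i => sum_le_sum fun j _ => mul_le_mul_of_nonneg_left (hvw j) (hQ i j)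

theorem eigenvalue_le_of_mulVec_le_smul [Nonempty n] {Q : Matrix n n ℝ}
    (hQ : ∀ i j, 0 ≤ Q i j) {v w : n → ℝ} (hv : ∀ i, 0 < v i) (hw : ∀ i, 0 < w i) {r s : ℝ}
    (hQv : Q *ᵥ v = r • v) (hQw : Q *ᵥ w ≤ s • w) : r ≤ s := by
  obtain ⟨i₀, -, hi₀⟩ := exists_max_image univ (fun i => v i / w i) univ_nonempty
  set c := v i₀ / w i₀
  have hvc : v ≤ c • w := fun j => by
    have := hi₀ j (mem_univ j)
    rwa [div_le_iff₀ (hw j)] at this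
  have hc : 0 ≤ c := div_nonneg (hv i₀).le (hw i₀).le
  have : r * v i₀ ≤ s * v i₀ :=
    calc r * v i₀ = (Q *ᵥ v) i₀ := by rw [hQv]; rfl
      _ ≤ (Q *ᵥ (c • w)) i₀ := mulVec_mono hQ hvc i₀
      _ = c * (Q *ᵥ w) i₀ := by rw [mulVec_smul]; rfl
      _ ≤ c * (s * w i₀) := mul_le_mul_of_nonneg_left (hQw i₀) hc
      _ = s * v i₀ := by simp only [c]; field_simp [(hw i₀).ne']
  exact le_of_mul_le_mul_right this (hv i₀)

theorem eigenvalue_le_rpow_mul_rpow [Nonempty n] {Q Q₁ Q₂ : Matrix n n ℝ}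
    (hQ : ∀ i j, 0 ≤ Q i j) (hQ₁ : ∀ i j, 0 ≤ Q₁ i j) (hQ₂ : ∀ i j, 0 ≤ Q₂ i j)
    {a b : ℝ} (ha : 0 ≤ a) (hb : 0 ≤ b) (hab : a + b = 1)
    (hQle : ∀ i j, Q i j ≤ Q₁ i j ^ a * Q₂ i j ^ b)
    {v u₁ u₂ : n → ℝ} (hv : ∀ i, 0 < v i) (hu₁ : ∀ i, 0 < u₁ i) (hu₂ : ∀ i, 0 < u₂ i)
    {r r₁ r₂ : ℝ} (hr₁ : 0 < r₁) (hr₂ : 0 < r₂)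
    (hQv : Q *ᵥ v = r • v) (hQu₁ : Q₁ *ᵥ u₁ = r₁ • u₁) (hQu₂ : Q₂ *ᵥ u₂ = r₂ • u₂) :
    r ≤ r₁ ^ a * r₂ ^ b := by
  have hrow₁ : ∀ i, ∑ j, Q₁ i j * u₁ j = r₁ * u₁ i := fun i => congrFun hQu₁ i
  have hrow₂ : ∀ i, ∑ j, Q₂ i j * u₂ j = r₂ * u₂ i := fun i => congrFun hQu₂ i
  refine eigenvalue_le_of_mulVec_le_smul hQ hv (w := fun i => u₁ i ^ a * u₂ i ^ b)
    (fun i => by have := hu₁ i; have := hu₂ i; positivity) hQv fun i => ?_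
  calc (Q *ᵥ fun i => u₁ i ^ a * u₂ i ^ b) i = ∑ j, Q i j * (u₁ j ^ a * u₂ j ^ b) := rfl
    _ ≤ ∑ j, (Q₁ i j * u₁ j) ^ a * (Q₂ i j * u₂ j) ^ b := sum_le_sum fun j _ => by
        rw [mul_rpow (hQ₁ i j) (hu₁ j).le, mul_rpow (hQ₂ i j) (hu₂ j).le,
          mul_mul_mul_comm]
        exact mul_le_mul_of_nonneg_right (hQle i j) (by have := hu₁ j; have := hu₂ j; positivity)
    _ ≤ (∑ j, Q₁ i j * u₁ j) ^ a * (∑ j, Q₂ i j * u₂ j) ^ b :=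
        Real.sum_rpow_mul_rpow_le_of_add_eq_one _
          (fun j _ => mul_nonneg (hQ₁ i j) (hu₁ j).le) (fun j _ => mul_nonneg (hQ₂ i j) (hu₂ j).le)
          (by rw [hrow₁]; exact mul_pos hr₁ (hu₁ i)) (by rw [hrow₂]; exact mul_pos hr₂ (hu₂ i))
          ha hb hab
    _ = (r₁ ^ a * r₂ ^ b) * (u₁ i ^ a * u₂ i ^ b) := by
        rw [hrow₁, hrow₂, mul_rpow hr₁.le (hu₁ i).le, mul_rpow hr₂.le (hu₂ i).le,
          mul_mul_mul_comm]

end Matrix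

section

variable {S : Type*}

noncomputable def tiltedKernel (p : S → S → ℝ) (g : S → ℝ) (ζ : ℝ) : Matrix S S ℝ :=
  Matrix.of fun i j => exp (ζ * g i) * p i j

variable {p : S → S → ℝ} {g : S → ℝ}

theorem tiltedKernel_nonneg (hp : ∀ i j, 0 ≤ p i j) (ζ : ℝ) (i j : S) :
    0 ≤ tiltedKernel p g ζ i j :=
  mul_nonneg (exp_pos _).le (hp i j)

theorem tiltedKernel_add_smul (hp : ∀ i j, 0 ≤ p i j) {a b : ℝ} (hab : a + b = 1) (x y : ℝ)
    (i j : S) :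
    tiltedKernel p g (a • x + b • y) i j =
      tiltedKernel p g x i j ^ a * tiltedKernel p g y i j ^ b := by
  simp only [tiltedKernel, Matrix.of_apply, smul_eq_mul]
  rw [mul_rpow (exp_pos _).le (hp i j), mul_rpow (exp_pos _).le (hp i j), ← exp_mul, ← exp_mul,
    mul_mul_mul_comm, ← exp_add, ← rpow_add' (hp i j) (by rw [hab]; exact one_ne_zero), hab,
    rpow_one]
  ring_nf

theorem tiltedKernel_mulVec_eq_smul [Fintype S] {ζ ρ : ℝ} {V : S → ℝ} (hρ : 0 < ρ)
    (hV : ∀ i, V i = exp (ζ * g i) / ρ * ∑ j, p i j * V j) :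
    tiltedKernel p g ζ *ᵥ V = ρ • V := by
  funext i
  rw [Pi.smul_apply, smul_eq_mul, hV i, ← mul_assoc, mul_div_cancel₀ _ hρ.ne', mul_sum]
  simp only [tiltedKernel, mulVec, dotProduct, of_apply, mul_assoc]

end

theorem log_rho_convex_general
    {S : Type*} [Fintype S] [Nonempty S]
    (p : S → S → ℝ)
    (hp_pos : ∀ i j, 0 < p i j)
    (g : S → ℝ)
    (ρ : ℝ → ℝ) (V : ℝ → S → ℝ)
    (hρ : ∀ ζ : ℝ, 0 < ρ ζ)
    (hV : ∀ ζ : ℝ, ∀ i, 0 < V ζ i)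
    (heq : ∀ ζ : ℝ, ∀ i,
      V ζ i = (Real.exp (ζ * g i) / ρ ζ) * ∑ j, p i j * V ζ j) :
    ConvexOn ℝ Set.univ (fun ζ : ℝ => Real.log (ρ ζ)) := by
  refine ⟨convex_univ, fun x _ y _ a b ha hb hab => ?_⟩
  dsimp only
  have hp : ∀ i j, 0 ≤ p i j := fun i j => (hp_pos i j).le
  have hρle : ρ (a • x + b • y) ≤ ρ x ^ a * ρ y ^ b :=
    Matrix.eigenvalue_le_rpow_mul_rpow (tiltedKernel_nonneg hp _) (tiltedKernel_nonneg hp x)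
      (tiltedKernel_nonneg hp y) ha hb hab (fun i j => (tiltedKernel_add_smul hp hab x y i j).le)
      (hV _) (hV x) (hV y) (hρ x) (hρ y) (tiltedKernel_mulVec_eq_smul (hρ _) (heq _))
      (tiltedKernel_mulVec_eq_smul (hρ x) (heq x)) (tiltedKernel_mulVec_eq_smul (hρ y) (heq y))
  calc log (ρ (a • x + b • y)) ≤ log (ρ x ^ a * ρ y ^ b) := log_le_log (hρ _) hρle
    _ = a • log (ρ x) + b • log (ρ y) := by
        rw [log_mul (rpow_pos_of_pos (hρ x) a).ne' (rpow_pos_of_pos (hρ y) b).ne',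
          log_rpow (hρ x), log_rpow (hρ y), smul_eq_mul, smul_eq_mul]

/-- If for every `ζ ∈ ℝ` the pair `(ρ ζ, V ζ)` solves the multiplicative
Poisson equation with `ρ ζ > 0` and `V ζ` strictly positive, then
`ζ ↦ log (ρ ζ)` is convex on `ℝ`. -/
theorem log_rho_convex
    {S : Type*} [Fintype S] [Nonempty S]
    (p : S → S → ℝ)
    (hp_pos : ∀ i j, 0 < p i j)
    (hp_row : ∀ i, ∑ j, p i j = 1)
    (g : S → ℝ)
    (ρ : ℝ → ℝ) (V : ℝ → S → ℝ)
    (hρ : ∀ ζ : ℝ, 0 < ρ ζ)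
    (hV : ∀ ζ : ℝ, ∀ i, 0 < V ζ i)
    (heq : ∀ ζ : ℝ, ∀ i,
      V ζ i = (Real.exp (ζ * g i) / ρ ζ) * ∑ j, p i j * V ζ j) :
    ConvexOn ℝ Set.univ (fun ζ : ℝ => Real.log (ρ ζ)) :=
  log_rho_convex_general p hp_pos g ρ V hρ hV heq
end

section
/- Let S be a finite nonempty set, p : S → S → ℝ a stochastic matrix with all entries strictly positive, g : S → ℝ, and ζ ∈ ℝ. Suppose ρ > 0 and a strictly positive V : S → ℝ satisfy the multiplicative Poisson equation, and suppose u : S → ℝ is strictly positive with Σ_i u(i)·exp(ζ·g(i))·p(i,j) = ρ·u(j) for all j (a positive left eigenvector of Q_ζ). Define π*(i) := u(i)·V(i) / Σ_j u(j)·V(j), and let p*(i,j) := exp(ζ·g(i))·p(i,j)·V(j)/(ρ·V(i)) be the tilted kernel. Then π* is a probability distribution on S and is stationary for p*: π*(i) ≥ 0 for all i, Σ_i π*(i) = 1, and Σ_i π*(i)·p*(i,j) = π*(j) for every j. -/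
/-!
Write `Q i j = exp (ζ * g i) * p i j`, so that `p* i j = Q i j * V j / (ρ * V i)` is the Doob
transform of `Q` by `V`. In `∑ i, u i * V i * p* i j` the factors `V i` cancel, leaving
`V j / ρ * ∑ i, u i * Q i j`, which is `u j * V j` because `u` is a left `ρ`-eigenvector of `Q`.
Stationarity is linear in the measure, so it survives normalisation by `∑ j, u j * V j > 0`.
-/

open Finset

section

variable {S K : Type*} [Fintype S] [Field K]

theorem sum_mul_doob_transform_eq {Q : S → S → K} {ρ : K} {u h : S → K} (hρ : ρ ≠ 0)
    (hh : ∀ i, h i ≠ 0) (hu : ∀ j, ∑ i, u i * Q i j = ρ * u j) (j : S) :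
    ∑ i, u i * h i * (Q i j * h j / (ρ * h i)) = u j * h j := by
  calc ∑ i, u i * h i * (Q i j * h j / (ρ * h i))
      = (∑ i, u i * Q i j) * (h j / ρ) := by
        rw [sum_mul]
        refine sum_congr rfl fun i _ => ?_
        field_simp [hh i]
    _ = u j * h j := by
        rw [hu j]
        field_simp

theorem sum_div_mul_eq_div_of_stationary {P : S → S → K} {μ : S → K}
    (hμ : ∀ j, ∑ i, μ i * P i j = μ j) (Z : K) (j : S) :
    ∑ i, μ i / Z * P i j = μ j / Z := by
  simp_rw [div_mul_eq_mul_div, ← sum_div, hμ j]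

theorem sum_div_sum_self {w : S → K} (hw : ∑ j, w j ≠ 0) :
    ∑ i, w i / ∑ j, w j = 1 := by
  rw [← sum_div, div_self hw]

end

theorem tilted_stationary_distribution_general
    {S : Type*} [Fintype S] [Nonempty S]
    (p : S → S → ℝ)
    (g : S → ℝ) (ζ : ℝ)
    (ρ : ℝ) (hρ : 0 < ρ)
    (V : S → ℝ) (hV : ∀ i, 0 < V i)
    (u : S → ℝ) (hu : ∀ i, 0 < u i)
    (hleft : ∀ j, ∑ i, u i * (Real.exp (ζ * g i) * p i j) = ρ * u j) :
    (∀ i, 0 ≤ u i * V i / ∑ j, u j * V j) ∧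
      (∑ i, u i * V i / ∑ j, u j * V j) = 1 ∧
      (∀ j, ∑ i, (u i * V i / ∑ k, u k * V k) *
          (Real.exp (ζ * g i) * p i j * V j / (ρ * V i))
        = u j * V j / ∑ k, u k * V k) := by
  have huV : ∀ i, 0 < u i * V i := fun i => mul_pos (hu i) (hV i)
  have hZ : 0 < ∑ j, u j * V j := sum_pos (fun j _ => huV j) univ_nonempty
  refine ⟨fun i => div_nonneg (huV i).le hZ.le, sum_div_sum_self hZ.ne', ?_⟩
  exact sum_div_mul_eq_div_of_stationary
    (sum_mul_doob_transform_eq hρ.ne' (fun i => (hV i).ne') hleft) _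

/-- If `u` is a positive left eigenvector of `Q_ζ i j = exp (ζ * g i) * p i j`
with eigenvalue `ρ` and `(ρ, V)` solves the multiplicative Poisson equation,
then `π* i = u i * V i / ∑ j, u j * V j` is a probability distribution on `S`
which is stationary for the tilted kernel
`p* i j = exp (ζ * g i) * p i j * V j / (ρ * V i)`. -/
theorem tilted_stationary_distribution
    {S : Type*} [Fintype S] [Nonempty S]
    (p : S → S → ℝ)
    (hp_pos : ∀ i j, 0 < p i j)
    (hp_row : ∀ i, ∑ j, p i j = 1)
    (g : S → ℝ) (ζ : ℝ)
    (ρ : ℝ) (hρ : 0 < ρ)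
    (V : S → ℝ) (hV : ∀ i, 0 < V i)
    (heq : ∀ i, V i = (Real.exp (ζ * g i) / ρ) * ∑ j, p i j * V j)
    (u : S → ℝ) (hu : ∀ i, 0 < u i)
    (hleft : ∀ j, ∑ i, u i * (Real.exp (ζ * g i) * p i j) = ρ * u j) :
    (∀ i, 0 ≤ u i * V i / ∑ j, u j * V j) ∧
      (∑ i, u i * V i / ∑ j, u j * V j) = 1 ∧
      (∀ j, ∑ i, (u i * V i / ∑ k, u k * V k) *
          (Real.exp (ζ * g i) * p i j * V j / (ρ * V i))
        = u j * V j / ∑ k, u k * V k) :=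
  tilted_stationary_distribution_general p g ζ ρ hρ V hV u hu hleft
end

section
/- Let S be a finite nonempty set, p : S → S → ℝ a stochastic matrix with all entries strictly positive, and g : S → ℝ a nonconstant function. Suppose ρ : ℝ → ℝ and V : ℝ → S → ℝ satisfy, for every ζ ≥ 0: ρ(ζ) > 0, V(ζ) is strictly positive, and V(ζ)(i) = (exp(ζ·g(i))/ρ(ζ)) · Σ_j p(i,j)·V(ζ)(j) for all i; assume also that ζ ↦ log ρ(ζ) is continuous on [0, ∞). If α ∈ ℝ satisfies α < max_{i ∈ S} g(i), then the function ζ ↦ ζ·α − log ρ(ζ) attains its supremum over [0, ∞): there exists ζ* ≥ 0 with ζ*·α − log ρ(ζ*) ≥ ζ·α − log ρ(ζ) for all ζ ≥ 0. -/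
/-- Existence of the maximizing tilting parameter: if `g` is nonconstant,
`(ρ ζ, V ζ)` solves the multiplicative Poisson equation for every `ζ ≥ 0`,
`ζ ↦ log (ρ ζ)` is continuous on `[0, ∞)`, and `α < max_i g i`, then
`ζ ↦ ζ * α - log (ρ ζ)` attains its supremum over `[0, ∞)`. -/
theorem exists_maximizing_tilt
    {S : Type*} [Fintype S] [Nonempty S]
    (p : S → S → ℝ)
    (hp_pos : ∀ i j, 0 < p i j)
    (hp_row : ∀ i, ∑ j, p i j = 1)
    (g : S → ℝ)
    (hg_nonconst : ∃ i j : S, g i ≠ g j)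
    (ρ : ℝ → ℝ) (V : ℝ → S → ℝ)
    (hρ : ∀ ζ : ℝ, 0 ≤ ζ → 0 < ρ ζ)
    (hV : ∀ ζ : ℝ, 0 ≤ ζ → ∀ i, 0 < V ζ i)
    (heq : ∀ ζ : ℝ, 0 ≤ ζ → ∀ i,
      V ζ i = (Real.exp (ζ * g i) / ρ ζ) * ∑ j, p i j * V ζ j)
    (hcont : ContinuousOn (fun ζ : ℝ => Real.log (ρ ζ)) (Set.Ici 0))
    (α : ℝ)
    (hα : α < Finset.univ.sup' Finset.univ_nonempty g) :
    ∃ ζstar : ℝ, 0 ≤ ζstar ∧ ∀ ζ : ℝ, 0 ≤ ζ →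
      ζ * α - Real.log (ρ ζ) ≤ ζstar * α - Real.log (ρ ζstar) := by
  set M := Finset.univ.sup' Finset.univ_nonempty g with hM
  obtain ⟨i₀, -, hgi₀⟩ := Finset.exists_mem_eq_sup' Finset.univ_nonempty g
  set f : ℝ → ℝ := fun ζ => ζ * α - Real.log (ρ ζ) with hfdef
  set c := Real.log (p i₀ i₀) with hc
  -- coercivity: ρ ζ ≥ exp(ζ M) * p i₀ i₀
  have hlog : ∀ ζ : ℝ, 0 ≤ ζ → ζ * M + c ≤ Real.log (ρ ζ) := by
    intro ζ hζ
    have h := heq ζ hζ i₀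
    have hsum : p i₀ i₀ * V ζ i₀ ≤ ∑ j, p i₀ j * V ζ j :=
      Finset.single_le_sum
        (fun j _ => le_of_lt (mul_pos (hp_pos i₀ j) (hV ζ hζ j))) (Finset.mem_univ i₀)
    have hVpos := hV ζ hζ i₀
    have hρpos := hρ ζ hζ
    rw [div_mul_eq_mul_div, eq_div_iff (ne_of_gt hρpos), ← hgi₀] at h
    have h2 : Real.exp (ζ * M) * (p i₀ i₀ * V ζ i₀) ≤ V ζ i₀ * ρ ζ := by
      rw [h]; exact mul_le_mul_of_nonneg_left hsum (Real.exp_pos _).le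
    have hcoerc : Real.exp (ζ * M) * p i₀ i₀ ≤ ρ ζ := by nlinarith
    have := Real.log_le_log (mul_pos (Real.exp_pos _) (hp_pos i₀ i₀)) hcoerc
    rwa [Real.log_mul (Real.exp_ne_zero _) (ne_of_gt (hp_pos i₀ i₀)), Real.log_exp] at this
  have hd : α - M < 0 := by linarith
  have hbound : ∀ ζ : ℝ, 0 ≤ ζ → f ζ ≤ ζ * (α - M) - c := by
    intro ζ hζ
    have := hlog ζ hζ
    simp only [hfdef]
    ring_nf
    nlinarith
  set T := max 0 ((f 0 + c) / (α - M)) with hT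
  have hT0 : (0:ℝ) ≤ T := le_max_left _ _
  have hfcont : ContinuousOn f (Set.Icc 0 T) :=
    (((continuous_id.mul continuous_const).continuousOn).sub
      (hcont.mono (fun x hx => hx.1))).mono (fun x hx => hx)
  obtain ⟨ζs, hζs, hmax⟩ := (isCompact_Icc (a := (0:ℝ)) (b := T)).exists_isMaxOn
    ⟨0, Set.left_mem_Icc.mpr hT0⟩ hfcont
  refine ⟨ζs, hζs.1, fun ζ hζ => ?_⟩
  by_cases hζT : ζ ≤ T
  · exact hmax ⟨hζ, hζT⟩
  · push_neg at hζT
    have h1 : (f 0 + c) / (α - M) ≤ ζ := le_of_lt (lt_of_le_of_lt (le_max_right _ _) hζT)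
    have h2 : ζ * (α - M) ≤ (f 0 + c) / (α - M) * (α - M) :=
      mul_le_mul_of_nonpos_right h1 hd.le
    rw [div_mul_cancel₀ _ (ne_of_lt hd)] at h2
    have h3 : f ζ ≤ f 0 := by
      have := hbound ζ hζ
      linarith
    exact le_trans h3 (hmax (Set.left_mem_Icc.mpr hT0))
end

section
/- Let S be a finite nonempty set, p : S → S → ℝ a stochastic matrix with all entries strictly positive, g : S → ℝ, and ζ₀ ∈ ℝ. Suppose ρ : ℝ → ℝ and V : ℝ → S → ℝ satisfy, for every ζ in an open interval around ζ₀: ρ(ζ) > 0, V(ζ) strictly positive, and ρ(ζ)·V(ζ)(i) = exp(ζ·g(i))·Σ_j p(i,j)·V(ζ)(j) for all i; suppose ρ and ζ ↦ V(ζ)(i) (for each i) are differentiable at ζ₀. Let u : S → ℝ be strictly positive with Σ_i u(i)·exp(ζ₀·g(i))·p(i,j) = ρ(ζ₀)·u(j) for all j. Then ρ'(ζ₀)/ρ(ζ₀) = Σ_i π*(i)·g(i), where π*(i) := u(i)·V(ζ₀)(i) / Σ_j u(j)·V(ζ₀)(j). -/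
/-!
Differentiate the eigenvalue equation `Q ζ *ᵥ V ζ = ρ ζ • V ζ` at `ζ₀` and pair the result with
the left eigenvector `u`: the terms involving `V'` cancel because `u ᵥ* Q ζ₀ = ρ ζ₀ • u`, leaving
`ρ' * (u ⬝ᵥ V ζ₀) = u ⬝ᵥ (Q' *ᵥ V ζ₀)`. For `Q ζ i j = exp (ζ * g i) * p i j` one has
`Q' *ᵥ V ζ₀ = g * (ρ ζ₀ • V ζ₀)`, so dividing by `ρ ζ₀ * (u ⬝ᵥ V ζ₀)` gives the mean of `g`
under `π* ∝ u * V ζ₀`.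
-/

open Filter Topology Matrix

section Perturbation

variable {S : Type*} [Fintype S]

theorem HasDerivAt.mulVec_apply {Q : ℝ → Matrix S S ℝ} {Q' : Matrix S S ℝ}
    {V : ℝ → S → ℝ} {V' : S → ℝ} {x : ℝ}
    (hQ : ∀ i j, HasDerivAt (fun ζ => Q ζ i j) (Q' i j) x)
    (hV : ∀ j, HasDerivAt (fun ζ => V ζ j) (V' j) x) (i : S) :
    HasDerivAt (fun ζ => (Q ζ *ᵥ V ζ) i) ((Q' *ᵥ V x + Q x *ᵥ V') i) x := by
  simp only [mulVec, dotProduct, Pi.add_apply, ← Finset.sum_add_distrib]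
  exact HasDerivAt.fun_sum fun j _ => (hQ i j).mul (hV j)

theorem dotProduct_mulVec_of_vecMul_eq_smul {Q : Matrix S S ℝ} {u : S → ℝ} {r : ℝ}
    (hu : u ᵥ* Q = r • u) (w : S → ℝ) : u ⬝ᵥ (Q *ᵥ w) = r * (u ⬝ᵥ w) := by
  rw [dotProduct_mulVec, hu, smul_dotProduct, smul_eq_mul]

theorem eigenvalue_deriv_mul_dotProduct {Q : ℝ → Matrix S S ℝ} {Q' : Matrix S S ℝ}
    {ρ : ℝ → ℝ} {ρ' : ℝ} {V : ℝ → S → ℝ} {V' : S → ℝ} {u : S → ℝ} {x : ℝ}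
    (heq : ∀ᶠ ζ in 𝓝 x, Q ζ *ᵥ V ζ = ρ ζ • V ζ) (hρ : HasDerivAt ρ ρ' x)
    (hQ : ∀ i j, HasDerivAt (fun ζ => Q ζ i j) (Q' i j) x)
    (hV : ∀ j, HasDerivAt (fun ζ => V ζ j) (V' j) x) (hu : u ᵥ* Q x = ρ x • u) :
    ρ' * (u ⬝ᵥ V x) = u ⬝ᵥ (Q' *ᵥ V x) := by
  have hdiff : Q' *ᵥ V x + Q x *ᵥ V' = ρ' • V x + ρ x • V' := by
    funext i
    refine (HasDerivAt.mulVec_apply hQ hV i).unique ?_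
    exact (hρ.mul (hV i)).congr_of_eventuallyEq (heq.mono fun ζ h => congrFun h i)
  have hpair := congrArg (u ⬝ᵥ ·) hdiff
  simp only [dotProduct_add, dotProduct_smul, smul_eq_mul,
    dotProduct_mulVec_of_vecMul_eq_smul hu] at hpair
  linarith

end Perturbation

theorem log_rho_derivative_eq_stationary_mean_general
    {S : Type*} [Fintype S] [Nonempty S]
    (p : S → S → ℝ)
    (g : S → ℝ) (ζ₀ : ℝ)
    (ρ : ℝ → ℝ) (V : ℝ → S → ℝ)
    (ε : ℝ) (hε : 0 < ε)
    (hρ : ∀ ζ ∈ Set.Ioo (ζ₀ - ε) (ζ₀ + ε), 0 < ρ ζ)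
    (hV : ∀ ζ ∈ Set.Ioo (ζ₀ - ε) (ζ₀ + ε), ∀ i, 0 < V ζ i)
    (heq : ∀ ζ ∈ Set.Ioo (ζ₀ - ε) (ζ₀ + ε), ∀ i,
      ρ ζ * V ζ i = Real.exp (ζ * g i) * ∑ j, p i j * V ζ j)
    (ρ' : ℝ) (hρ' : HasDerivAt ρ ρ' ζ₀)
    (V' : S → ℝ) (hV' : ∀ i, HasDerivAt (fun ζ => V ζ i) (V' i) ζ₀)
    (u : S → ℝ) (hu : ∀ i, 0 < u i)
    (hleft : ∀ j, ∑ i, u i * (Real.exp (ζ₀ * g i) * p i j) = ρ ζ₀ * u j) :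
    ρ' / ρ ζ₀ = ∑ i, (u i * V ζ₀ i / ∑ j, u j * V ζ₀ j) * g i := by
  classical
  set Q : ℝ → Matrix S S ℝ := fun ζ => of fun i j => Real.exp (ζ * g i) * p i j
  have hmem : ζ₀ ∈ Set.Ioo (ζ₀ - ε) (ζ₀ + ε) := ⟨by linarith, by linarith⟩
  have hQV : ∀ ζ ∈ Set.Ioo (ζ₀ - ε) (ζ₀ + ε), Q ζ *ᵥ V ζ = ρ ζ • V ζ := fun ζ hζ => by
    funext i
    simp only [Q, mulVec, dotProduct, of_apply, Pi.smul_apply, smul_eq_mul, heq ζ hζ i,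
      Finset.mul_sum, mul_assoc]
  have hQ' : ∀ i j, HasDerivAt (fun ζ => Q ζ i j) ((diagonal g * Q ζ₀) i j) ζ₀ := fun i j => by
    simp only [diagonal_mul, Q, of_apply]
    exact ((hasDerivAt_mul_const (g i)).exp.mul_const (p i j)).congr_deriv (by ring)
  have hmain := eigenvalue_deriv_mul_dotProduct
    (eventually_of_mem (Ioo_mem_nhds hmem.1 hmem.2) hQV) hρ' hQ' hV'
    (funext hleft)
  have hA : 0 < ∑ j, u j * V ζ₀ j :=
    Finset.sum_pos (fun i _ => mul_pos (hu i) (hV ζ₀ hmem i)) Finset.univ_nonempty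
  rw [← mulVec_mulVec, hQV ζ₀ hmem] at hmain
  simp only [dotProduct, mulVec_diagonal, Pi.smul_apply, smul_eq_mul] at hmain
  calc ρ' / ρ ζ₀ = ρ' * (∑ j, u j * V ζ₀ j) / (ρ ζ₀ * ∑ j, u j * V ζ₀ j) :=
        (mul_div_mul_right _ _ hA.ne').symm
    _ = ∑ i, (u i * V ζ₀ i / ∑ j, u j * V ζ₀ j) * g i := by
        rw [hmain, Finset.sum_div]
        refine Finset.sum_congr rfl fun i _ => ?_
        field_simp [(hρ ζ₀ hmem).ne']

/-- Derivative identity for the Perron eigenvalue: if `(ρ ζ, V ζ)` solves the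
multiplicative Poisson equation on an open interval around `ζ₀`, `ρ` and each
`ζ ↦ V ζ i` are differentiable at `ζ₀` with respective derivatives `ρ'` and
`V' i`, and `u` is a positive left eigenvector of `Q_{ζ₀}` with eigenvalue
`ρ ζ₀`, then `ρ'(ζ₀) / ρ(ζ₀) = ∑ i, π* i * g i` where
`π* i = u i * V ζ₀ i / ∑ j, u j * V ζ₀ j`. -/
theorem log_rho_derivative_eq_stationary_mean
    {S : Type*} [Fintype S] [Nonempty S]
    (p : S → S → ℝ)
    (hp_pos : ∀ i j, 0 < p i j)
    (hp_row : ∀ i, ∑ j, p i j = 1)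
    (g : S → ℝ) (ζ₀ : ℝ)
    (ρ : ℝ → ℝ) (V : ℝ → S → ℝ)
    (ε : ℝ) (hε : 0 < ε)
    (hρ : ∀ ζ ∈ Set.Ioo (ζ₀ - ε) (ζ₀ + ε), 0 < ρ ζ)
    (hV : ∀ ζ ∈ Set.Ioo (ζ₀ - ε) (ζ₀ + ε), ∀ i, 0 < V ζ i)
    (heq : ∀ ζ ∈ Set.Ioo (ζ₀ - ε) (ζ₀ + ε), ∀ i,
      ρ ζ * V ζ i = Real.exp (ζ * g i) * ∑ j, p i j * V ζ j)
    (ρ' : ℝ) (hρ' : HasDerivAt ρ ρ' ζ₀)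
    (V' : S → ℝ) (hV' : ∀ i, HasDerivAt (fun ζ => V ζ i) (V' i) ζ₀)
    (u : S → ℝ) (hu : ∀ i, 0 < u i)
    (hleft : ∀ j, ∑ i, u i * (Real.exp (ζ₀ * g i) * p i j) = ρ ζ₀ * u j) :
    ρ' / ρ ζ₀ = ∑ i, (u i * V ζ₀ i / ∑ j, u j * V ζ₀ j) * g i :=
  log_rho_derivative_eq_stationary_mean_general p g ζ₀ ρ V ε hε hρ hV heq ρ' hρ' V' hV' u hu hleft
end
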